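/- arXiv:2307.06235 — 3 statements merged into one kernel-verified Lean document; each statement's English description precedes it below -/
import Mathlib

section
/- Generative (mutual-prediction) lower bound on mutual information: Let ΩX and ΩY be nonempty finite types and let p be a probability mass function on ΩX × ΩY with marginals p_X and p_Y, regarded as the joint distribution of (X,Y). Let q₁ : ΩX × ΩY → ℝ be a conditional model for Y given X (q₁ ≥ 0, ∑_y q₁(x,y) = 1 whenever p_X(x) > 0) and q₂ : ΩX × ΩY → ℝ a conditional model for X given Y (q₂ ≥ 0, ∑_x q₂(x,y) = 1 whenever p_Y(y) > 0), with q₁(x,y) > 0 and q₂(x,y) > 0 whenever p(x,y) > 0. Then I(X;Y) ≥ (1/2) · ∑_{(x,y) : p(x,y) > 0} p(x,y) · ( log q₁(x,y) + log q₂(x,y) ). -/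
/-- Shannon entropy of a distribution `q` on a finite type, with natural log
and the convention `0 * log 0 = 0` (automatic since `Real.log 0 = 0`). -/
noncomputable def entropy {Ω : Type*} [Fintype Ω] (q : Ω → ℝ) : ℝ :=
  -∑ x, q x * Real.log (q x)

lemma aux_sum_one {ΩX ΩY : Type*} [Fintype ΩX] [Fintype ΩY]
    (p : ΩX × ΩY → ℝ) (hp : ∀ z, 0 ≤ p z) (hps : ∑ z, p z = 1) :
    ∑ z ∈ Finset.univ.filter (fun z => 0 < p z), p z = 1 := by
  rw [← hps]
  apply Finset.sum_subset (Finset.filter_subset _ _)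
  intro z _ hz
  simp only [Finset.mem_filter, Finset.mem_univ, true_and, not_lt] at hz
  exact le_antisymm hz (hp z)

lemma aux_bound {ΩX ΩY : Type*} [Fintype ΩX] [Fintype ΩY]
    (p : ΩX × ΩY → ℝ) (hp : ∀ z, 0 ≤ p z) (hps : ∑ z, p z = 1)
    (q : ΩX × ΩY → ℝ) (hq : ∀ z, 0 ≤ q z)
    (hqsum : ∀ x, 0 < (∑ y, p (x, y)) → ∑ y, q (x, y) = 1)
    (hqpos : ∀ z, 0 < p z → 0 < q z) :
    ∑ z ∈ Finset.univ.filter (fun z => 0 < p z), p z * Real.log (q z)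
      ≤ ∑ z ∈ Finset.univ.filter (fun z => 0 < p z),
          p z * (Real.log (p z) - Real.log (∑ y, p (z.1, y))) := by
  classical
  set S := Finset.univ.filter (fun z : ΩX × ΩY => 0 < p z) with hS
  have hmargnn : ∀ x : ΩX, 0 ≤ ∑ y, p (x, y) := fun x =>
    Finset.sum_nonneg fun y _ => hp _
  have hmem : ∀ z ∈ S, 0 < p z := by
    intro z hz; simpa [hS] using hz
  have key : ∀ z ∈ S,
      p z * Real.log (q z) - p z * (Real.log (p z) - Real.log (∑ y, p (z.1, y)))
        ≤ q z * (∑ y, p (z.1, y)) - p z := by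
    intro z hz
    have hpz : 0 < p z := hmem z hz
    have hqz : 0 < q z := hqpos z hpz
    have hm : 0 < ∑ y, p (z.1, y) := by
      refine lt_of_lt_of_le hpz ?_
      have := Finset.single_le_sum (f := fun y => p (z.1, y))
        (fun y _ => hp _) (Finset.mem_univ z.2)
      simpa using this
    have hrw : Real.log (q z) - (Real.log (p z) - Real.log (∑ y, p (z.1, y)))
        = Real.log (q z * (∑ y, p (z.1, y)) / p z) := by
      rw [Real.log_div (by positivity) (ne_of_gt hpz),
        Real.log_mul (ne_of_gt hqz) (ne_of_gt hm)]
      ring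
    have hlog : Real.log (q z * (∑ y, p (z.1, y)) / p z)
        ≤ q z * (∑ y, p (z.1, y)) / p z - 1 :=
      Real.log_le_sub_one_of_pos (by positivity)
    calc p z * Real.log (q z) - p z * (Real.log (p z) - Real.log (∑ y, p (z.1, y)))
        = p z * Real.log (q z * (∑ y, p (z.1, y)) / p z) := by rw [← hrw]; ring
      _ ≤ p z * (q z * (∑ y, p (z.1, y)) / p z - 1) := by
          exact mul_le_mul_of_nonneg_left hlog hpz.le
      _ = q z * (∑ y, p (z.1, y)) - p z := by field_simp
  have hsum1 : ∑ z ∈ S, p z = 1 := aux_sum_one p hp hps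
  have hsum2 : ∑ z ∈ S, q z * (∑ y, p (z.1, y)) ≤ 1 := by
    have h1 : ∑ z ∈ S, q z * (∑ y, p (z.1, y))
        ≤ ∑ z : ΩX × ΩY, q z * (∑ y, p (z.1, y)) := by
      apply Finset.sum_le_sum_of_subset_of_nonneg (Finset.subset_univ _)
      intro z _ _
      exact mul_nonneg (hq z) (hmargnn _)
    have h2 : ∑ z : ΩX × ΩY, q z * (∑ y, p (z.1, y)) = 1 := by
      rw [Fintype.sum_prod_type]
      have : ∀ x : ΩX, ∑ y, q (x, y) * (∑ y', p (x, y')) = ∑ y, p (x, y) := by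
        intro x
        rw [← Finset.sum_mul]
        rcases lt_or_eq_of_le (hmargnn x) with h | h
        · rw [hqsum x h, one_mul]
        · rw [← h, mul_zero]
      simp_rw [this]
      rw [← Fintype.sum_prod_type]
      exact hps
    linarith
  have := Finset.sum_le_sum key
  rw [Finset.sum_sub_distrib, Finset.sum_sub_distrib, hsum1] at this
  linarith

/-- Generative (mutual-prediction) lower bound on mutual information:
for a joint pmf `p` on `ΩX × ΩY` with marginals `pX`, `pY`, a conditional
model `q₁` for `Y` given `X` (`q₁ ≥ 0`, `∑ y, q₁ (x, y) = 1` whenever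
`pX x > 0`) and a conditional model `q₂` for `X` given `Y` (`q₂ ≥ 0`,
`∑ x, q₂ (x, y) = 1` whenever `pY y > 0`), both strictly positive on the
support of `p`,
`I(X;Y) ≥ (1/2) · ∑_{(x,y) : p(x,y) > 0} p(x,y) · (log q₁(x,y) + log q₂(x,y))`,
where `I(X;Y) = H(X) + H(Y) - H(X,Y)`. -/
theorem mutualInfo_generative_lower_bound
    {ΩX ΩY : Type*} [Fintype ΩX] [Fintype ΩY] [Nonempty ΩX] [Nonempty ΩY]
    (p : ΩX × ΩY → ℝ) (hp : ∀ z, 0 ≤ p z) (hps : ∑ z, p z = 1)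
    (q₁ : ΩX × ΩY → ℝ) (hq₁ : ∀ z, 0 ≤ q₁ z)
    (hq₁sum : ∀ x, 0 < (∑ y, p (x, y)) → ∑ y, q₁ (x, y) = 1)
    (hq₁pos : ∀ z, 0 < p z → 0 < q₁ z)
    (q₂ : ΩX × ΩY → ℝ) (hq₂ : ∀ z, 0 ≤ q₂ z)
    (hq₂sum : ∀ y, 0 < (∑ x, p (x, y)) → ∑ x, q₂ (x, y) = 1)
    (hq₂pos : ∀ z, 0 < p z → 0 < q₂ z) :
    entropy (fun x : ΩX => ∑ y, p (x, y)) +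
        entropy (fun y : ΩY => ∑ x, p (x, y)) -
        entropy p
      ≥
      (1 / 2) *
        ∑ z ∈ Finset.univ.filter (fun z => 0 < p z),
          p z * (Real.log (q₁ z) + Real.log (q₂ z)) := by
  classical
  set S := Finset.univ.filter (fun z : ΩX × ΩY => 0 < p z) with hS
  have hpz0 : ∀ z, z ∉ S → p z = 0 := by
    intro z hz
    simp only [hS, Finset.mem_filter, Finset.mem_univ, true_and, not_lt] at hz
    exact le_antisymm hz (hp z)
  have hmargXnn : ∀ x : ΩX, 0 ≤ ∑ y, p (x, y) := fun x =>
    Finset.sum_nonneg fun y _ => hp _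
  have hmargYnn : ∀ y : ΩY, 0 ≤ ∑ x, p (x, y) := fun y =>
    Finset.sum_nonneg fun x _ => hp _
  -- entropy rewrites
  have hHp : entropy p = -∑ z ∈ S, p z * Real.log (p z) := by
    unfold entropy
    congr 1
    rw [eq_comm]
    apply Finset.sum_subset (Finset.subset_univ _)
    intro z _ hz
    rw [hpz0 z hz]; simp
  have hHX : entropy (fun x : ΩX => ∑ y, p (x, y))
      = -∑ z ∈ S, p z * Real.log (∑ y, p (z.1, y)) := by
    unfold entropy
    congr 1
    calc ∑ x, (∑ y, p (x, y)) * Real.log (∑ y, p (x, y))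
        = ∑ x, ∑ y, p (x, y) * Real.log (∑ y', p (x, y')) := by
          simp_rw [Finset.sum_mul]
      _ = ∑ z : ΩX × ΩY, p z * Real.log (∑ y', p (z.1, y')) := by
          rw [Fintype.sum_prod_type]
      _ = ∑ z ∈ S, p z * Real.log (∑ y', p (z.1, y')) := by
          rw [eq_comm]
          apply Finset.sum_subset (Finset.subset_univ _)
          intro z _ hz
          rw [hpz0 z hz]; simp
  have hHY : entropy (fun y : ΩY => ∑ x, p (x, y))
      = -∑ z ∈ S, p z * Real.log (∑ x, p (x, z.2)) := by
    unfold entropy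
    congr 1
    calc ∑ y, (∑ x, p (x, y)) * Real.log (∑ x, p (x, y))
        = ∑ y, ∑ x, p (x, y) * Real.log (∑ x', p (x', y)) := by
          simp_rw [Finset.sum_mul]
      _ = ∑ z : ΩX × ΩY, p z * Real.log (∑ x', p (x', z.2)) := by
          rw [Fintype.sum_prod_type, Finset.sum_comm]
      _ = ∑ z ∈ S, p z * Real.log (∑ x', p (x', z.2)) := by
          rw [eq_comm]
          apply Finset.sum_subset (Finset.subset_univ _)
          intro z _ hz
          rw [hpz0 z hz]; simp
  -- claim A
  have hA : ∑ z ∈ S, p z * Real.log (q₁ z)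
      ≤ ∑ z ∈ S, p z * (Real.log (p z) - Real.log (∑ y, p (z.1, y))) :=
    aux_bound p hp hps q₁ hq₁ hq₁sum hq₁pos
  -- claim B, via swapping
  have hB : ∑ z ∈ S, p z * Real.log (q₂ z)
      ≤ ∑ z ∈ S, p z * (Real.log (p z) - Real.log (∑ x, p (x, z.2))) := by
    have hswap := aux_bound (fun z : ΩY × ΩX => p (z.2, z.1))
      (fun z => hp _)
      (by rw [Fintype.sum_prod_type, Finset.sum_comm, ← Fintype.sum_prod_type]; exact hps)
      (fun z : ΩY × ΩX => q₂ (z.2, z.1)) (fun z => hq₂ _)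
      (fun y h => hq₂sum y h) (fun z h => hq₂pos _ h)
    have e1 : ∑ z ∈ Finset.univ.filter (fun z : ΩY × ΩX => 0 < p (z.2, z.1)),
        p (z.2, z.1) * Real.log (q₂ (z.2, z.1))
        = ∑ z ∈ S, p z * Real.log (q₂ z) := by
      apply Finset.sum_nbij' (fun z : ΩY × ΩX => (z.2, z.1)) (fun z : ΩX × ΩY => (z.2, z.1)) <;>
        simp [hS]
    have e2 : ∑ z ∈ Finset.univ.filter (fun z : ΩY × ΩX => 0 < p (z.2, z.1)),
        p (z.2, z.1) * (Real.log (p (z.2, z.1)) - Real.log (∑ x, p (x, z.1)))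
        = ∑ z ∈ S, p z * (Real.log (p z) - Real.log (∑ x, p (x, z.2))) := by
      apply Finset.sum_nbij' (fun z : ΩY × ΩX => (z.2, z.1)) (fun z : ΩX × ΩY => (z.2, z.1)) <;>
        simp [hS]
    rw [← e1, ← e2]
    exact hswap
  -- claims C
  have hpX1 : ∀ x : ΩX, ∑ y, p (x, y) ≤ 1 := by
    intro x
    rw [← hps, Fintype.sum_prod_type]
    exact Finset.single_le_sum (f := fun x' => ∑ y, p (x', y))
      (fun x' _ => hmargXnn x') (Finset.mem_univ x)
  have hpY1 : ∀ y : ΩY, ∑ x, p (x, y) ≤ 1 := by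
    intro y
    rw [← hps, Fintype.sum_prod_type, Finset.sum_comm]
    exact Finset.single_le_sum (f := fun y' => ∑ x, p (x, y'))
      (fun y' _ => hmargYnn y') (Finset.mem_univ y)
  have hCX : ∑ z ∈ S, p z * Real.log (∑ y, p (z.1, y)) ≤ 0 := by
    apply Finset.sum_nonpos
    intro z _
    exact mul_nonpos_of_nonneg_of_nonpos (hp z)
      (Real.log_nonpos (hmargXnn _) (hpX1 _))
  have hCY : ∑ z ∈ S, p z * Real.log (∑ x, p (x, z.2)) ≤ 0 := by
    apply Finset.sum_nonpos
    intro z _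
    exact mul_nonpos_of_nonneg_of_nonpos (hp z)
      (Real.log_nonpos (hmargYnn _) (hpY1 _))
  rw [hHp, hHX, hHY]
  have expand : ∑ z ∈ S, p z * (Real.log (q₁ z) + Real.log (q₂ z))
      = ∑ z ∈ S, p z * Real.log (q₁ z) + ∑ z ∈ S, p z * Real.log (q₂ z) := by
    rw [← Finset.sum_add_distrib]; congr 1; ext z; ring
  have e3 : ∑ z ∈ S, p z * (Real.log (p z) - Real.log (∑ y, p (z.1, y)))
      = ∑ z ∈ S, p z * Real.log (p z) - ∑ z ∈ S, p z * Real.log (∑ y, p (z.1, y)) := by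
    rw [← Finset.sum_sub_distrib]; congr 1; ext z; ring
  have e4 : ∑ z ∈ S, p z * (Real.log (p z) - Real.log (∑ x, p (x, z.2)))
      = ∑ z ∈ S, p z * Real.log (p z) - ∑ z ∈ S, p z * Real.log (∑ x, p (x, z.2)) := by
    rw [← Finset.sum_sub_distrib]; congr 1; ext z; ring
  rw [expand] at *
  rw [e3] at hA
  rw [e4] at hB
  rw [ge_iff_le, expand]
  have hplog : ∑ z ∈ S, p z * Real.log (p z) ≤ 0 := by
    apply Finset.sum_nonpos
    intro z hz
    have hpz : 0 < p z := by simpa [hS] using hz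
    exact mul_nonpos_of_nonneg_of_nonpos (hp z)
      (Real.log_nonpos hpz.le (by
        calc p z ≤ ∑ y, p (z.1, y) := by
              have := Finset.single_le_sum (f := fun y => p (z.1, y))
                (fun y _ => hp _) (Finset.mem_univ z.2)
              simpa using this
          _ ≤ 1 := hpX1 _))
  linarith
end

section
/- Blend-then-predict lower bound for a fixed partition (core of Proposition 1 of the paper): Let Ω₁, Ω₂, Ω₃, Ω₄ be nonempty finite types and let p be a probability mass function on Ω₁ × Ω₂ × Ω₃ × Ω₄, the joint distribution of (A₁, A₂, B₁, B₂). Let q₁ be a conditional model for A₂ given (A₁,B₂) (q₁(a₁,b₂,a₂) ≥ 0, ∑_{a₂} q₁(a₁,b₂,a₂) = 1 whenever the (A₁,B₂)-marginal is positive at (a₁,b₂)) and q₂ a conditional model for B₁ given (A₁,B₂) (analogous conditions), with q₁ and q₂ strictly positive at every point of positive joint probability. Then ∑_{(a₁,a₂,b₁,b₂) : p > 0} p(a₁,a₂,b₁,b₂) · ( log q₁(a₁,b₂,a₂) + log q₂(a₁,b₂,b₁) ) ≤ I(A₂;(A₁,B₂)) + I(B₁;(A₁,B₂)); i.e. the blend-then-predict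 training objective is a lower bound on the sum of mutual informations between each recovered part and the blended input. -/
section Marginals

variable {Ω₁ Ω₂ Ω₃ Ω₄ : Type*} [Fintype Ω₁] [Fintype Ω₂] [Fintype Ω₃] [Fintype Ω₄]

/-- `H(A₁)` for a joint pmf `p` of `(A₁, A₂, B₁, B₂)`. -/
noncomputable def HA1 (p : Ω₁ × Ω₂ × Ω₃ × Ω₄ → ℝ) : ℝ :=
  entropy (fun a₁ : Ω₁ => ∑ a₂, ∑ b₁, ∑ b₂, p (a₁, a₂, b₁, b₂))

/-- `H(A₂)` for a joint pmf `p` of `(A₁, A₂, B₁, B₂)`. -/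
noncomputable def HA2 (p : Ω₁ × Ω₂ × Ω₃ × Ω₄ → ℝ) : ℝ :=
  entropy (fun a₂ : Ω₂ => ∑ a₁, ∑ b₁, ∑ b₂, p (a₁, a₂, b₁, b₂))

/-- `H(B₁)` for a joint pmf `p` of `(A₁, A₂, B₁, B₂)`. -/
noncomputable def HB1 (p : Ω₁ × Ω₂ × Ω₃ × Ω₄ → ℝ) : ℝ :=
  entropy (fun b₁ : Ω₃ => ∑ a₁, ∑ a₂, ∑ b₂, p (a₁, a₂, b₁, b₂))

/-- `H(B₂)` for a joint pmf `p` of `(A₁, A₂, B₁, B₂)`. -/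
noncomputable def HB2 (p : Ω₁ × Ω₂ × Ω₃ × Ω₄ → ℝ) : ℝ :=
  entropy (fun b₂ : Ω₄ => ∑ a₁, ∑ a₂, ∑ b₁, p (a₁, a₂, b₁, b₂))

/-- `H(A₁,A₂)` for a joint pmf `p` of `(A₁, A₂, B₁, B₂)`. -/
noncomputable def HA1A2 (p : Ω₁ × Ω₂ × Ω₃ × Ω₄ → ℝ) : ℝ :=
  entropy (fun w : Ω₁ × Ω₂ => ∑ b₁, ∑ b₂, p (w.1, w.2, b₁, b₂))

/-- `H(A₁,B₁)` for a joint pmf `p` of `(A₁, A₂, B₁, B₂)`. -/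
noncomputable def HA1B1 (p : Ω₁ × Ω₂ × Ω₃ × Ω₄ → ℝ) : ℝ :=
  entropy (fun w : Ω₁ × Ω₃ => ∑ a₂, ∑ b₂, p (w.1, a₂, w.2, b₂))

/-- `H(A₁,B₂)` for a joint pmf `p` of `(A₁, A₂, B₁, B₂)`. -/
noncomputable def HA1B2 (p : Ω₁ × Ω₂ × Ω₃ × Ω₄ → ℝ) : ℝ :=
  entropy (fun w : Ω₁ × Ω₄ => ∑ a₂, ∑ b₁, p (w.1, a₂, b₁, w.2))

/-- `H(A₂,B₂)` for a joint pmf `p` of `(A₁, A₂, B₁, B₂)`. -/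
noncomputable def HA2B2 (p : Ω₁ × Ω₂ × Ω₃ × Ω₄ → ℝ) : ℝ :=
  entropy (fun w : Ω₂ × Ω₄ => ∑ a₁, ∑ b₁, p (a₁, w.1, b₁, w.2))

/-- `H(B₁,B₂)` for a joint pmf `p` of `(A₁, A₂, B₁, B₂)`. -/
noncomputable def HB1B2 (p : Ω₁ × Ω₂ × Ω₃ × Ω₄ → ℝ) : ℝ :=
  entropy (fun w : Ω₃ × Ω₄ => ∑ a₁, ∑ a₂, p (a₁, a₂, w.1, w.2))

/-- `H(A₁,A₂,B₂)` for a joint pmf `p` of `(A₁, A₂, B₁, B₂)`. -/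
noncomputable def HA1A2B2 (p : Ω₁ × Ω₂ × Ω₃ × Ω₄ → ℝ) : ℝ :=
  entropy (fun w : Ω₁ × Ω₂ × Ω₄ => ∑ b₁, p (w.1, w.2.1, b₁, w.2.2))

/-- `H(A₁,B₁,B₂)` for a joint pmf `p` of `(A₁, A₂, B₁, B₂)`. -/
noncomputable def HA1B1B2 (p : Ω₁ × Ω₂ × Ω₃ × Ω₄ → ℝ) : ℝ :=
  entropy (fun w : Ω₁ × Ω₃ × Ω₄ => ∑ a₂, p (w.1, a₂, w.2.1, w.2.2))

end Marginals

/-! Each half of the objective is a cross-entropy `E[log q(X | Y)]`, where `X` is the predicted part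
and `Y = (A₁, B₂)`. Gibbs' inequality `∑ P log q' ≤ ∑ P log P + ∑ q' - ∑ P`, applied to the joint
law `P` of `(X, Y)` and the weights `q'(x, y) = q(x | y) P_Y(y)` (of the same total mass as `P`,
since `q` is normalised wherever `P_Y > 0`), bounds it by `H(Y) - H(X, Y)`; adding `H(X) ≥ 0`
gives `I(X; Y)`. -/

open Finset Real

theorem mul_log_le_mul_log_add_sub {x y : ℝ} (hx : 0 ≤ x) (hy : 0 ≤ y) (hxy : 0 < x → 0 < y) :
    x * log y ≤ x * log x + (y - x) := by
  rcases hx.eq_or_lt with rfl | hx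
  · simpa using hy
  have hy := hxy hx
  have key := mul_le_mul_of_nonneg_left (log_le_sub_one_of_pos (div_pos hy hx)) hx.le
  rw [log_div hy.ne' hx.ne', mul_sub, mul_sub, mul_div_cancel₀ _ hx.ne', mul_one] at key
  linarith

theorem sum_mul_log_le_sum_mul_log_add_sub {ι : Type*} (s : Finset ι) (p q : ι → ℝ)
    (hp : ∀ i ∈ s, 0 ≤ p i) (hq : ∀ i ∈ s, 0 ≤ q i) (hpq : ∀ i ∈ s, 0 < p i → 0 < q i) :
    ∑ i ∈ s, p i * log (q i) ≤ ∑ i ∈ s, p i * log (p i) + (∑ i ∈ s, q i - ∑ i ∈ s, p i) := by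
  rw [← sum_sub_distrib, ← sum_add_distrib]
  exact sum_le_sum fun i hi => mul_log_le_mul_log_add_sub (hp i hi) (hq i hi) (hpq i hi)

section Entropy

variable {β γ : Type*} [Fintype β] [Fintype γ]

theorem entropy_nonneg {q : β → ℝ} (hq : ∀ x, 0 ≤ q x) (hq1 : ∑ x, q x = 1) :
    0 ≤ entropy q := by
  rw [entropy, ← sum_neg_distrib]
  refine sum_nonneg fun x _ => ?_
  have hle : q x ≤ 1 := hq1 ▸ single_le_sum (fun y _ => hq y) (mem_univ x)
  simpa [negMulLog] using negMulLog_nonneg (hq x) hle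

theorem entropy_comp_equiv (e : β ≃ γ) (q : γ → ℝ) : entropy (q ∘ e) = entropy q := by
  rw [entropy, entropy, Function.comp_def, e.sum_comp fun y => q y * log (q y)]

end Entropy

open Classical in
noncomputable def marginal {α β : Type*} [Fintype α] (p : α → ℝ) (f : α → β) (b : β) : ℝ :=
  ∑ a with f a = b, p a

section Marginal

variable {α β γ : Type*} [Fintype α] (p : α → ℝ) (f : α → β)

theorem marginal_eq_sum_ite [DecidableEq β] (b : β) :
    marginal p f b = ∑ a, if f a = b then p a else 0 := by
  rw [marginal, sum_filter]
  congr!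

variable {p f} in
theorem marginal_nonneg (hp : ∀ a, 0 ≤ p a) (b : β) : 0 ≤ marginal p f b :=
  sum_nonneg fun a _ => hp a

variable {p f} in
theorem exists_pos_of_marginal_pos {b : β} (hb : 0 < marginal p f b) :
    ∃ a, f a = b ∧ 0 < p a := by
  classical
  rw [marginal, ← sum_const_zero] at hb
  obtain ⟨a, ha, hpa⟩ := exists_lt_of_sum_lt hb
  exact ⟨a, (mem_filter.1 ha).2, hpa⟩

variable [Fintype β]

theorem sum_mul_comp_eq_sum_marginal_mul (F : β → ℝ) :
    ∑ a, p a * F (f a) = ∑ b, marginal p f b * F b := by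
  classical
  simp_rw [marginal, sum_mul]
  rw [← sum_fiberwise univ f fun a => p a * F (f a)]
  exact sum_congr rfl fun b _ => sum_congr rfl fun a ha => by rw [(mem_filter.1 ha).2]

theorem sum_marginal : ∑ b, marginal p f b = ∑ a, p a := by
  simpa using (sum_mul_comp_eq_sum_marginal_mul p f fun _ => 1).symm

theorem marginal_marginal (g : β → γ) : marginal (marginal p f) g = marginal p (g ∘ f) := by
  classical
  ext c
  have h := sum_mul_comp_eq_sum_marginal_mul p f fun b => if g b = c then (1 : ℝ) else 0
  simp only [mul_boole] at h
  rw [marginal_eq_sum_ite (marginal p f), marginal_eq_sum_ite p]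
  exact h.symm

theorem marginal_snd_apply [Fintype γ] (P : β × γ → ℝ) (y : γ) :
    marginal P Prod.snd y = ∑ x, P (x, y) := by
  classical
  simp [marginal_eq_sum_ite, Fintype.sum_prod_type]

end Marginal

noncomputable def mutualInfo {α β γ : Type*} [Fintype α] [Fintype β] [Fintype γ] (p : α → ℝ)
    (X : α → β) (Y : α → γ) : ℝ :=
  entropy (marginal p X) + entropy (marginal p Y) - entropy (marginal p fun a => (X a, Y a))

section CrossEntropy

variable {α β γ : Type*} [Fintype α] [Fintype β] [Fintype γ]

theorem sum_mul_log_le_entropy_marginal_snd_sub_entropy (P : β × γ → ℝ) (q : γ → β → ℝ)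
    (hP : ∀ w, 0 ≤ P w) (hq : ∀ y x, 0 ≤ q y x)
    (hq1 : ∀ y, 0 < marginal P Prod.snd y → ∑ x, q y x = 1)
    (hqpos : ∀ w, 0 < P w → 0 < q w.2 w.1) :
    ∑ w, P w * log (q w.2 w.1) ≤ entropy (marginal P Prod.snd) - entropy P := by
  set m := marginal P Prod.snd
  have hm : ∀ y, 0 ≤ m y := marginal_nonneg hP
  have hmpos : ∀ w, 0 < P w → 0 < m w.2 := fun w hw => by
    rw [show m w.2 = _ from marginal_snd_apply P w.2]
    exact hw.trans_le (single_le_sum (fun x _ => hP (x, w.2)) (mem_univ w.1))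
  have hgibbs := sum_mul_log_le_sum_mul_log_add_sub univ P (fun w => q w.2 w.1 * m w.2)
    (fun w _ => hP w) (fun w _ => mul_nonneg (hq _ _) (hm _))
    (fun w _ hw => mul_pos (hqpos w hw) (hmpos w hw))
  have hsplit : ∑ w, P w * log (q w.2 w.1 * m w.2)
      = ∑ w, P w * log (q w.2 w.1) + ∑ y, m y * log (m y) := by
    rw [← sum_mul_comp_eq_sum_marginal_mul P Prod.snd fun y => log (m y), ← sum_add_distrib]
    refine sum_congr rfl fun w _ => ?_
    rcases (hP w).eq_or_lt with hw | hw
    · simp [← hw]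
    · rw [log_mul (hqpos w hw).ne' (hmpos w hw).ne', mul_add]
  have hmass : ∑ w : β × γ, q w.2 w.1 * m w.2 = ∑ w, P w := by
    calc ∑ w : β × γ, q w.2 w.1 * m w.2 = ∑ y, (∑ x, q y x) * m y := by
          simp only [Fintype.sum_prod_type_right, sum_mul]
      _ = ∑ y, m y := sum_congr rfl fun y _ => by
          rcases (hm y).eq_or_lt with hy | hy
          · rw [← hy, mul_zero]
          · rw [hq1 y hy, one_mul]
      _ = ∑ w, P w := sum_marginal P Prod.snd
  rw [hsplit, hmass, sub_self, add_zero] at hgibbs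
  simp only [entropy]
  linarith

theorem sum_mul_log_le_mutualInfo (p : α → ℝ) (X : α → β) (Y : α → γ) (q : γ → β → ℝ)
    (hp : ∀ a, 0 ≤ p a) (hp1 : ∑ a, p a = 1) (hq : ∀ y x, 0 ≤ q y x)
    (hq1 : ∀ y, 0 < marginal p Y y → ∑ x, q y x = 1)
    (hqpos : ∀ a, 0 < p a → 0 < q (Y a) (X a)) :
    ∑ a, p a * log (q (Y a) (X a)) ≤ mutualInfo p X Y := by
  set P := marginal p fun a => (X a, Y a)
  have hPY : marginal P Prod.snd = marginal p Y := marginal_marginal p _ Prod.snd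
  have hPpos : ∀ w, 0 < P w → 0 < q w.2 w.1 := fun w hw => by
    obtain ⟨a, rfl, ha⟩ := exists_pos_of_marginal_pos hw
    exact hqpos a ha
  have hX : 0 ≤ entropy (marginal p X) :=
    entropy_nonneg (marginal_nonneg hp) (by rw [sum_marginal, hp1])
  calc ∑ a, p a * log (q (Y a) (X a)) = ∑ w : β × γ, P w * log (q w.2 w.1) :=
        sum_mul_comp_eq_sum_marginal_mul p (fun a => (X a, Y a)) fun w => log (q w.2 w.1)
    _ ≤ entropy (marginal P Prod.snd) - entropy P :=
        sum_mul_log_le_entropy_marginal_snd_sub_entropy P q (marginal_nonneg hp) hq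
          (by rwa [hPY]) hPpos
    _ ≤ mutualInfo p X Y := by rw [mutualInfo, hPY]; linarith

end CrossEntropy

def Equiv.prodLeftComm (α β γ : Type*) : α × β × γ ≃ β × α × γ where
  toFun w := (w.2.1, w.1, w.2.2)
  invFun w := (w.2.1, w.1, w.2.2)
  left_inv _ := rfl
  right_inv _ := rfl

section FourVariables

/- `simp` runs in two passes below: after the first, the `if` conditions are coordinate equations
whose decidability instances still mention the whole tuple, which blocks `sum_ite_irrel`;
rewriting the conditions (`eq_comm`, `ite_and`) rebuilds the instances. -/

variable {Ω₁ Ω₂ Ω₃ Ω₄ : Type*} [Fintype Ω₁] [Fintype Ω₂] [Fintype Ω₃] [Fintype Ω₄]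
  (p : Ω₁ × Ω₂ × Ω₃ × Ω₄ → ℝ)

theorem marginal_A1B2_apply (a₁ : Ω₁) (b₂ : Ω₄) :
    marginal p (fun z => (z.1, z.2.2.2)) (a₁, b₂) = ∑ a₂, ∑ b₁, p (a₁, a₂, b₁, b₂) := by
  classical
  simp only [marginal_eq_sum_ite, Fintype.sum_prod_type]
  simp [ite_and]

theorem HA1B2_eq_entropy_marginal :
    HA1B2 p = entropy (marginal p fun z => (z.1, z.2.2.2)) := by
  rw [HA1B2]
  congr 1
  ext ⟨a₁, b₂⟩
  exact (marginal_A1B2_apply p a₁ b₂).symm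

theorem HA2_eq_entropy_marginal : HA2 p = entropy (marginal p fun z => z.2.1) := by
  classical
  rw [HA2]
  congr 1
  ext a₂
  simp only [marginal_eq_sum_ite, Fintype.sum_prod_type]
  simp [eq_comm (b := a₂)]

theorem HB1_eq_entropy_marginal : HB1 p = entropy (marginal p fun z => z.2.2.1) := by
  classical
  rw [HB1]
  congr 1
  ext b₁
  simp only [marginal_eq_sum_ite, Fintype.sum_prod_type]
  simp [eq_comm (b := b₁)]

theorem HA1A2B2_eq_entropy_marginal :
    HA1A2B2 p = entropy (marginal p fun z => (z.2.1, z.1, z.2.2.2)) := by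
  classical
  rw [HA1A2B2, ← entropy_comp_equiv (Equiv.prodLeftComm Ω₁ Ω₂ Ω₄)]
  congr 1
  ext ⟨a₁, a₂, b₂⟩
  simp only [Function.comp_apply, Equiv.prodLeftComm, Equiv.coe_fn_mk, marginal_eq_sum_ite,
    Fintype.sum_prod_type]
  simp [ite_and]

theorem HA1B1B2_eq_entropy_marginal :
    HA1B1B2 p = entropy (marginal p fun z => (z.2.2.1, z.1, z.2.2.2)) := by
  classical
  rw [HA1B1B2, ← entropy_comp_equiv (Equiv.prodLeftComm Ω₁ Ω₃ Ω₄)]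
  congr 1
  ext ⟨a₁, b₁, b₂⟩
  simp only [Function.comp_apply, Equiv.prodLeftComm, Equiv.coe_fn_mk, marginal_eq_sum_ite,
    Fintype.sum_prod_type]
  simp [ite_and]

end FourVariables

theorem blend_then_predict_lower_bound_general
    {Ω₁ Ω₂ Ω₃ Ω₄ : Type*} [Fintype Ω₁] [Fintype Ω₂] [Fintype Ω₃] [Fintype Ω₄]
    (p : Ω₁ × Ω₂ × Ω₃ × Ω₄ → ℝ)
    (hp : ∀ z, 0 ≤ p z) (hps : ∑ z, p z = 1)
    (q₁ : Ω₁ → Ω₄ → Ω₂ → ℝ) (q₂ : Ω₁ → Ω₄ → Ω₃ → ℝ)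
    (hq₁ : ∀ a₁ b₂ a₂, 0 ≤ q₁ a₁ b₂ a₂)
    (hq₁sum : ∀ a₁ b₂, 0 < (∑ a₂, ∑ b₁, p (a₁, a₂, b₁, b₂)) →
      ∑ a₂, q₁ a₁ b₂ a₂ = 1)
    (hq₁pos : ∀ a₁ a₂ b₁ b₂, 0 < p (a₁, a₂, b₁, b₂) → 0 < q₁ a₁ b₂ a₂)
    (hq₂ : ∀ a₁ b₂ b₁, 0 ≤ q₂ a₁ b₂ b₁)
    (hq₂sum : ∀ a₁ b₂, 0 < (∑ a₂, ∑ b₁, p (a₁, a₂, b₁, b₂)) →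
      ∑ b₁, q₂ a₁ b₂ b₁ = 1)
    (hq₂pos : ∀ a₁ a₂ b₁ b₂, 0 < p (a₁, a₂, b₁, b₂) → 0 < q₂ a₁ b₂ b₁) :
    ∑ z ∈ Finset.univ.filter (fun z => 0 < p z),
        p z * (Real.log (q₁ z.1 z.2.2.2 z.2.1) + Real.log (q₂ z.1 z.2.2.2 z.2.2.1))
      ≤
      -- I(A₂;(A₁,B₂)) + I(B₁;(A₁,B₂))
      (HA2 p + HA1B2 p - HA1A2B2 p) + (HB1 p + HA1B2 p - HA1B1B2 p) := by
  have hI₁ : HA2 p + HA1B2 p - HA1A2B2 p =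
      mutualInfo p (fun z => z.2.1) fun z => (z.1, z.2.2.2) := by
    rw [mutualInfo, HA2_eq_entropy_marginal, HA1B2_eq_entropy_marginal,
      HA1A2B2_eq_entropy_marginal]
  have hI₂ : HB1 p + HA1B2 p - HA1B1B2 p =
      mutualInfo p (fun z => z.2.2.1) fun z => (z.1, z.2.2.2) := by
    rw [mutualInfo, HB1_eq_entropy_marginal, HA1B2_eq_entropy_marginal,
      HA1B1B2_eq_entropy_marginal]
  rw [hI₁, hI₂, sum_filter_of_ne fun z _ hz => (hp z).lt_of_ne fun h => hz (by simp [← h])]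
  simp only [mul_add, sum_add_distrib]
  refine add_le_add ?_ ?_
  · exact sum_mul_log_le_mutualInfo p (fun z => z.2.1) (fun z => (z.1, z.2.2.2))
      (Function.uncurry q₁) hp hps (fun y => hq₁ y.1 y.2)
      (fun ⟨a₁, b₂⟩ hy => hq₁sum a₁ b₂ (by rwa [marginal_A1B2_apply] at hy))
      (fun z hz => hq₁pos _ _ _ _ hz)
  · exact sum_mul_log_le_mutualInfo p (fun z => z.2.2.1) (fun z => (z.1, z.2.2.2))
      (Function.uncurry q₂) hp hps (fun y => hq₂ y.1 y.2)
      (fun ⟨a₁, b₂⟩ hy => hq₂sum a₁ b₂ (by rwa [marginal_A1B2_apply] at hy))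
      (fun z hz => hq₂pos _ _ _ _ hz)

/-- Blend-then-predict lower bound for a fixed partition (core of
Proposition 1): for a joint pmf `p` of `(A₁, A₂, B₁, B₂)` on finite types, a
conditional model `q₁` for `A₂` given `(A₁,B₂)` and a conditional model `q₂`
for `B₁` given `(A₁,B₂)` (nonnegative, normalized wherever the `(A₁,B₂)`-
marginal is positive, and strictly positive at every point of positive joint
probability), the blend-then-predict objective is a lower bound on
`I(A₂;(A₁,B₂)) + I(B₁;(A₁,B₂))`, where `I(X;Y) = H(X) + H(Y) - H(X,Y)` and
marginals are obtained by summing `p`. -/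
theorem blend_then_predict_lower_bound
    {Ω₁ Ω₂ Ω₃ Ω₄ : Type*} [Fintype Ω₁] [Fintype Ω₂] [Fintype Ω₃] [Fintype Ω₄]
    [Nonempty Ω₁] [Nonempty Ω₂] [Nonempty Ω₃] [Nonempty Ω₄]
    (p : Ω₁ × Ω₂ × Ω₃ × Ω₄ → ℝ)
    (hp : ∀ z, 0 ≤ p z) (hps : ∑ z, p z = 1)
    (q₁ : Ω₁ → Ω₄ → Ω₂ → ℝ) (q₂ : Ω₁ → Ω₄ → Ω₃ → ℝ)
    (hq₁ : ∀ a₁ b₂ a₂, 0 ≤ q₁ a₁ b₂ a₂)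
    (hq₁sum : ∀ a₁ b₂, 0 < (∑ a₂, ∑ b₁, p (a₁, a₂, b₁, b₂)) →
      ∑ a₂, q₁ a₁ b₂ a₂ = 1)
    (hq₁pos : ∀ a₁ a₂ b₁ b₂, 0 < p (a₁, a₂, b₁, b₂) → 0 < q₁ a₁ b₂ a₂)
    (hq₂ : ∀ a₁ b₂ b₁, 0 ≤ q₂ a₁ b₂ b₁)
    (hq₂sum : ∀ a₁ b₂, 0 < (∑ a₂, ∑ b₁, p (a₁, a₂, b₁, b₂)) →
      ∑ b₁, q₂ a₁ b₂ b₁ = 1)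
    (hq₂pos : ∀ a₁ a₂ b₁ b₂, 0 < p (a₁, a₂, b₁, b₂) → 0 < q₂ a₁ b₂ b₁) :
    ∑ z ∈ Finset.univ.filter (fun z => 0 < p z),
        p z * (Real.log (q₁ z.1 z.2.2.2 z.2.1) + Real.log (q₂ z.1 z.2.2.2 z.2.2.1))
      ≤
      -- I(A₂;(A₁,B₂)) + I(B₁;(A₁,B₂))
      (HA2 p + HA1B2 p - HA1A2B2 p) + (HB1 p + HA1B2 p - HA1B1B2 p) :=
  blend_then_predict_lower_bound_general p hp hps q₁ q₂ hq₁ hq₁sum hq₁pos hq₂ hq₂sum hq₂pos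
end

section
/- InfoNCE lower bound on mutual information: Let ΩX and ΩY be nonempty finite types, let p be a probability mass function on ΩX × ΩY with Y-marginal p_Y, regarded as the joint distribution of (X,Y), let N ≥ 1 be a natural number, and let f : ΩX × ΩY → ℝ be any strictly positive function (the critic). Consider the joint distribution on ΩX × ΩY^N in which (x, y₁) is drawn from p and y₂, …, y_N are drawn independently from the marginal p_Y; explicitly, the weight of (x, y₁, …, y_N) is p(x,y₁) · ∏_{i=2}^{N} p_Y(y_i). Then I(X;Y) ≥ log N + ∑_{(x,y₁,…,y_N)} p(x,y₁) · ∏_{i=2}^{N} p_Y(y_i) · log( f(x,y₁) / ∑_{i=1}^{N} f(x,y_i) ); equivalently, I(X;Y) ≥ log N − L_InfoNCE where L_InfoNCE = −E[ log( f(x,y₁) / ∑_{i=1}^{N} f(x,y_i) ) ]. -/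
open Finset in

lemma aux_pi_marg {ΩY : Type*} [Fintype ΩY] {N : ℕ} (z0 : Fin N) (pY : ΩY → ℝ)
    (hpY1 : ∑ y, pY y = 1) (F : ΩY → ℝ) :
    ∑ ys : Fin N → ΩY,
        F (ys z0) * ∏ i ∈ Finset.univ.filter (fun i => i ≠ z0), pY (ys i)
      = ∑ y, F y := by
  classical
  have h1 : ∀ ys : Fin N → ΩY,
      F (ys z0) * ∏ i ∈ Finset.univ.filter (fun i => i ≠ z0), pY (ys i)
        = ∏ i, (if i = z0 then F (ys i) else pY (ys i)) := by
    intro ys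
    rw [Finset.filter_ne' Finset.univ z0,
      ← Finset.mul_prod_erase Finset.univ _ (Finset.mem_univ z0), if_pos rfl]
    congr 1
    exact Finset.prod_congr rfl fun i hi => (if_neg (Finset.ne_of_mem_erase hi)).symm
  calc ∑ ys : Fin N → ΩY,
        F (ys z0) * ∏ i ∈ Finset.univ.filter (fun i => i ≠ z0), pY (ys i)
      = ∑ ys : Fin N → ΩY, ∏ i, (fun i y => if i = z0 then F y else pY y) i (ys i) :=
        Finset.sum_congr rfl fun ys _ => h1 ys
    _ = ∏ i, ∑ y, (if i = z0 then F y else pY y) :=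
        (Fintype.prod_sum (fun i y => if i = z0 then F y else pY y)).symm
    _ = ∑ y, F y := by
        rw [← Finset.mul_prod_erase Finset.univ _ (Finset.mem_univ z0)]
        have h3 : ∀ i ∈ Finset.univ.erase z0, (∑ y, if i = z0 then F y else pY y) = 1 := by
          intro i hi
          simp only [if_neg (Finset.ne_of_mem_erase hi)]
          exact hpY1
        rw [Finset.prod_congr rfl h3, Finset.prod_const_one, mul_one]
        simp

open Finset in

lemma aux_sym {ΩX ΩY : Type*} [Fintype ΩY] {N : ℕ} (pY : ΩY → ℝ) (f : ΩX × ΩY → ℝ)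
    (x : ΩX) (z0 j : Fin N) :
    ∑ ys : Fin N → ΩY, (∏ i, pY (ys i)) * (f (x, ys j) / ∑ i, f (x, ys i))
      = ∑ ys : Fin N → ΩY, (∏ i, pY (ys i)) * (f (x, ys z0) / ∑ i, f (x, ys i)) := by
  classical
  apply Fintype.sum_equiv (Equiv.arrowCongr (Equiv.swap z0 j) (Equiv.refl ΩY))
  intro ys
  have e_apply : ∀ i, (Equiv.arrowCongr (Equiv.swap z0 j) (Equiv.refl ΩY) ys) i
      = ys (Equiv.swap z0 j i) := by
    intro i
    simp [Equiv.arrowCongr, Equiv.symm_swap]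
  simp only [e_apply]
  rw [Equiv.prod_comp (Equiv.swap z0 j) (fun i => pY (ys i)),
    Equiv.sum_comp (Equiv.swap z0 j) (fun i => f (x, ys i)),
    Equiv.swap_apply_left]

open Finset in
lemma aux_Nsum {ΩX ΩY : Type*} [Fintype ΩY] {N : ℕ} (z0 : Fin N) (pY : ΩY → ℝ)
    (hpY1 : ∑ y, pY y = 1)
    (f : ΩX × ΩY → ℝ) (hf : ∀ z, 0 < f z) (x : ΩX) :
    ∑ ys : Fin N → ΩY, (∏ i, pY (ys i)) * ((N : ℝ) * f (x, ys z0) / ∑ i, f (x, ys i)) = 1 := by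
  classical
  have hNe : Nonempty (Fin N) := ⟨z0⟩
  have hSf : ∀ ys : Fin N → ΩY, 0 < ∑ i, f (x, ys i) :=
    fun ys => Finset.sum_pos (fun i _ => hf _) Finset.univ_nonempty
  have h1 : ∑ ys : Fin N → ΩY, (∏ i, pY (ys i)) * ((N:ℝ) * f (x, ys z0) / ∑ i, f (x, ys i))
      = ∑ j : Fin N, ∑ ys : Fin N → ΩY, (∏ i, pY (ys i)) * (f (x, ys j) / ∑ i, f (x, ys i)) := by
    rw [Finset.sum_congr rfl (fun j _ => aux_sym pY f x z0 j), Finset.sum_const,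
      Finset.card_univ, Fintype.card_fin, nsmul_eq_mul, Finset.mul_sum]
    refine Finset.sum_congr rfl fun ys _ => by ring
  rw [h1, Finset.sum_comm]
  have h2 : ∀ ys : Fin N → ΩY,
      ∑ j, (∏ i, pY (ys i)) * (f (x, ys j) / ∑ i, f (x, ys i)) = ∏ i, pY (ys i) := by
    intro ys
    rw [← Finset.mul_sum, ← Finset.sum_div, div_self (hSf ys).ne', mul_one]
  rw [Finset.sum_congr rfl fun ys _ => h2 ys,
    ← Fintype.prod_sum (fun (_ : Fin N) (y : ΩY) => pY y)]
  simp [hpY1]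

lemma aux_pointwise (n f1 Sf px py1 p1 Pr PrAll : ℝ)
    (hn : 0 < n) (hf1 : 0 < f1) (hSf : 0 < Sf)
    (hp1 : 0 ≤ p1) (hPr : 0 ≤ Pr)
    (hpx : p1 ≤ px) (hpy : p1 ≤ py1)
    (hProd : py1 * Pr = PrAll) :
    p1 * Pr * (Real.log n + Real.log (f1 / Sf) - Real.log (p1 / (px * py1)))
      ≤ px * (PrAll * (n * f1 / Sf)) - p1 * Pr := by
  have hpx0 : 0 ≤ px := hp1.trans hpx
  have hpy0 : 0 ≤ py1 := hp1.trans hpy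
  rcases eq_or_lt_of_le (mul_nonneg hp1 hPr) with h0 | hpos
  · rw [← h0, zero_mul, sub_zero]
    exact mul_nonneg hpx0 (mul_nonneg (hProd ▸ mul_nonneg hpy0 hPr)
      (div_nonneg (mul_nonneg hn.le hf1.le) hSf.le))
  · have hp1' : 0 < p1 := by
      rcases mul_pos_iff.mp hpos with ⟨h1, _⟩ | ⟨h1, _⟩
      · exact h1
      · linarith
    have hPr' : 0 < Pr := by
      rcases mul_pos_iff.mp hpos with ⟨_, h2⟩ | ⟨_, h2⟩
      · exact h2
      · linarith
    have hpx' : 0 < px := hp1'.trans_le hpx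
    have hpy' : 0 < py1 := hp1'.trans_le hpy
    have hlogeq : Real.log n + Real.log (f1 / Sf) - Real.log (p1 / (px * py1))
        = Real.log ((n * f1 * (px * py1)) / (p1 * Sf)) := by
      rw [Real.log_div (ne_of_gt (mul_pos (mul_pos hn hf1) (mul_pos hpx' hpy')))
          (ne_of_gt (mul_pos hp1' hSf)),
        Real.log_mul (ne_of_gt (mul_pos hn hf1)) (ne_of_gt (mul_pos hpx' hpy')),
        Real.log_mul hn.ne' hf1.ne', Real.log_mul hpx'.ne' hpy'.ne',
        Real.log_mul hp1'.ne' hSf.ne', Real.log_div hf1.ne' hSf.ne',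
        Real.log_div hp1'.ne' (ne_of_gt (mul_pos hpx' hpy')),
        Real.log_mul hpx'.ne' hpy'.ne']
      ring
    rw [hlogeq]
    have hZ : 0 < (n * f1 * (px * py1)) / (p1 * Sf) :=
      div_pos (mul_pos (mul_pos hn hf1) (mul_pos hpx' hpy')) (mul_pos hp1' hSf)
    have hle := mul_le_mul_of_nonneg_left (Real.log_le_sub_one_of_pos hZ) hpos.le
    refine hle.trans (le_of_eq ?_)
    rw [← hProd]
    field_simp

open Finset in
theorem aux_key {ΩX ΩY : Type*} [Fintype ΩX] [Fintype ΩY]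
    (p : ΩX × ΩY → ℝ) (hp : ∀ z, 0 ≤ p z)
    (pX : ΩX → ℝ) (pY : ΩY → ℝ)
    (hpX : ∀ x, pX x = ∑ y, p (x, y)) (hpY : ∀ y, pY y = ∑ x, p (x, y))
    (hps : ∑ x, ∑ y, p (x, y) = 1)
    {N : ℕ} (z0 : Fin N)
    (f : ΩX × ΩY → ℝ) (hf : ∀ z, 0 < f z) :
    ∑ x, ∑ y, p (x, y) * Real.log (p (x, y) / (pX x * pY y))
      ≥ Real.log N +
        ∑ x : ΩX, ∑ ys : Fin N → ΩY,
          (p (x, ys z0) * ∏ i ∈ Finset.univ.filter (fun i : Fin N => i ≠ z0), pY (ys i)) *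
            Real.log (f (x, ys z0) / ∑ i : Fin N, f (x, ys i)) := by
  classical
  have hNe : Nonempty (Fin N) := ⟨z0⟩
  have hN0 : 0 < N := z0.pos
  have hpXs : ∑ x, pX x = 1 := by rw [Finset.sum_congr rfl fun x _ => hpX x]; exact hps
  have hpYs : ∑ y, pY y = 1 := by
    rw [Finset.sum_congr rfl fun y _ => hpY y, Finset.sum_comm]; exact hps
  have hpY0 : ∀ y, 0 ≤ pY y := fun y => (hpY y) ▸ Finset.sum_nonneg fun x _ => hp _
  have hSf : ∀ x (ys : Fin N → ΩY), 0 < ∑ i, f (x, ys i) :=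
    fun x ys => Finset.sum_pos (fun i _ => hf _) Finset.univ_nonempty
  -- total mass of the tuple distribution
  have hw1 : ∑ x : ΩX, ∑ ys : Fin N → ΩY,
      (p (x, ys z0) * ∏ i ∈ Finset.univ.filter (fun i : Fin N => i ≠ z0), pY (ys i)) = 1 := by
    rw [Finset.sum_congr rfl fun x _ => (aux_pi_marg z0 pY hpYs (fun y => p (x, y))).trans
      (hpX x).symm]
    exact hpXs
  -- the tuple expectation of log g equals the mutual-information sum
  have hwI : ∑ x : ΩX, ∑ ys : Fin N → ΩY,
      (p (x, ys z0) * ∏ i ∈ Finset.univ.filter (fun i : Fin N => i ≠ z0), pY (ys i)) *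
        Real.log (p (x, ys z0) / (pX x * pY (ys z0)))
      = ∑ x, ∑ y, p (x, y) * Real.log (p (x, y) / (pX x * pY y)) := by
    refine Finset.sum_congr rfl fun x _ => ?_
    rw [← aux_pi_marg z0 pY hpYs (fun y => p (x, y) * Real.log (p (x, y) / (pX x * pY y)))]
    exact Finset.sum_congr rfl fun ys _ => by ring
  -- total mass of the comparison quantity
  have hu1 : ∑ x : ΩX, ∑ ys : Fin N → ΩY,
      pX x * ((∏ i, pY (ys i)) * ((N:ℝ) * f (x, ys z0) / ∑ i, f (x, ys i))) = 1 := by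
    have h : ∀ x : ΩX, ∑ ys : Fin N → ΩY,
        pX x * ((∏ i, pY (ys i)) * ((N:ℝ) * f (x, ys z0) / ∑ i, f (x, ys i))) = pX x := by
      intro x
      rw [← Finset.mul_sum, aux_Nsum z0 pY hpYs f hf x, mul_one]
    rw [Finset.sum_congr rfl fun x _ => h x]
    exact hpXs
  -- pointwise bound
  have hpt : ∀ (x : ΩX) (ys : Fin N → ΩY),
      (p (x, ys z0) * ∏ i ∈ Finset.univ.filter (fun i : Fin N => i ≠ z0), pY (ys i)) *
          (Real.log N + Real.log (f (x, ys z0) / ∑ i, f (x, ys i)) -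
            Real.log (p (x, ys z0) / (pX x * pY (ys z0))))
        ≤ pX x * ((∏ i, pY (ys i)) * ((N:ℝ) * f (x, ys z0) / ∑ i, f (x, ys i))) -
            (p (x, ys z0) * ∏ i ∈ Finset.univ.filter (fun i : Fin N => i ≠ z0), pY (ys i)) := by
    intro x ys
    refine aux_pointwise (N:ℝ) (f (x, ys z0)) (∑ i, f (x, ys i)) (pX x) (pY (ys z0))
      (p (x, ys z0)) _ _ (by exact_mod_cast hN0) (hf _) (hSf x ys) (hp _)
      (Finset.prod_nonneg fun i _ => hpY0 _) ?_ ?_ ?_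
    · rw [hpX x]
      exact Finset.single_le_sum (fun y _ => hp (x, y)) (Finset.mem_univ (ys z0))
    · rw [hpY (ys z0)]
      exact Finset.single_le_sum (fun x' _ => hp (x', ys z0)) (Finset.mem_univ x)
    · rw [Finset.filter_ne' Finset.univ z0]
      exact Finset.mul_prod_erase Finset.univ (fun i => pY (ys i)) (Finset.mem_univ z0)
  -- assemble
  have big : ∑ x : ΩX, ∑ ys : Fin N → ΩY,
      (p (x, ys z0) * ∏ i ∈ Finset.univ.filter (fun i : Fin N => i ≠ z0), pY (ys i)) *
        (Real.log N + Real.log (f (x, ys z0) / ∑ i, f (x, ys i)) -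
          Real.log (p (x, ys z0) / (pX x * pY (ys z0)))) ≤ 0 := by
    calc ∑ x : ΩX, ∑ ys : Fin N → ΩY,
        (p (x, ys z0) * ∏ i ∈ Finset.univ.filter (fun i : Fin N => i ≠ z0), pY (ys i)) *
          (Real.log N + Real.log (f (x, ys z0) / ∑ i, f (x, ys i)) -
            Real.log (p (x, ys z0) / (pX x * pY (ys z0))))
        ≤ ∑ x : ΩX, ∑ ys : Fin N → ΩY,
            (pX x * ((∏ i, pY (ys i)) * ((N:ℝ) * f (x, ys z0) / ∑ i, f (x, ys i))) -
              (p (x, ys z0) * ∏ i ∈ Finset.univ.filter (fun i : Fin N => i ≠ z0), pY (ys i))) :=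
          Finset.sum_le_sum fun x _ => Finset.sum_le_sum fun ys _ => hpt x ys
      _ = 0 := by
          simp only [Finset.sum_sub_distrib]
          rw [hu1, hw1, sub_self]
  have expand : ∑ x : ΩX, ∑ ys : Fin N → ΩY,
      (p (x, ys z0) * ∏ i ∈ Finset.univ.filter (fun i : Fin N => i ≠ z0), pY (ys i)) *
        (Real.log N + Real.log (f (x, ys z0) / ∑ i, f (x, ys i)) -
          Real.log (p (x, ys z0) / (pX x * pY (ys z0))))
      = (∑ x : ΩX, ∑ ys : Fin N → ΩY,
          (p (x, ys z0) * ∏ i ∈ Finset.univ.filter (fun i : Fin N => i ≠ z0), pY (ys i))) *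
            Real.log N
        + ∑ x : ΩX, ∑ ys : Fin N → ΩY,
            (p (x, ys z0) * ∏ i ∈ Finset.univ.filter (fun i : Fin N => i ≠ z0), pY (ys i)) *
              Real.log (f (x, ys z0) / ∑ i, f (x, ys i))
        - ∑ x : ΩX, ∑ ys : Fin N → ΩY,
            (p (x, ys z0) * ∏ i ∈ Finset.univ.filter (fun i : Fin N => i ≠ z0), pY (ys i)) *
              Real.log (p (x, ys z0) / (pX x * pY (ys z0))) := by
    simp only [Finset.sum_mul]
    rw [← Finset.sum_add_distrib, ← Finset.sum_sub_distrib]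
    refine Finset.sum_congr rfl fun x _ => ?_
    rw [← Finset.sum_add_distrib, ← Finset.sum_sub_distrib]
    refine Finset.sum_congr rfl fun ys _ => by ring
  rw [expand, hw1, hwI, one_mul] at big
  linarith [big]

open Finset in
lemma aux_entropy {ΩX ΩY : Type*} [Fintype ΩX] [Fintype ΩY]
    (p : ΩX × ΩY → ℝ) (hp : ∀ z, 0 ≤ p z) :
    entropy (fun x : ΩX => ∑ y, p (x, y)) + entropy (fun y : ΩY => ∑ x, p (x, y)) -
        entropy p
      = ∑ x, ∑ y, p (x, y) *
          Real.log (p (x, y) / ((∑ y', p (x, y')) * (∑ x', p (x', y)))) := by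
  classical
  have h3 : ∀ (x : ΩX) (y : ΩY),
      p (x, y) * Real.log (p (x, y) / ((∑ y', p (x, y')) * (∑ x', p (x', y))))
        = p (x, y) * Real.log (p (x, y)) - p (x, y) * Real.log (∑ y', p (x, y'))
          - p (x, y) * Real.log (∑ x', p (x', y)) := by
    intro x y
    rcases eq_or_lt_of_le (hp (x, y)) with h0 | h0
    · rw [← h0]; simp
    · have hX : (0:ℝ) < ∑ y', p (x, y') :=
        lt_of_lt_of_le h0 (Finset.single_le_sum (fun y' _ => hp (x, y')) (Finset.mem_univ y))
      have hY : (0:ℝ) < ∑ x', p (x', y) :=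
        lt_of_lt_of_le h0 (Finset.single_le_sum (fun x' _ => hp (x', y)) (Finset.mem_univ x))
      rw [Real.log_div h0.ne' (mul_pos hX hY).ne', Real.log_mul hX.ne' hY.ne']
      ring
  have hR : ∑ x, ∑ y, p (x, y) *
        Real.log (p (x, y) / ((∑ y', p (x, y')) * (∑ x', p (x', y))))
      = (∑ x, ∑ y, p (x, y) * Real.log (p (x, y)))
        - (∑ x, ∑ y, p (x, y) * Real.log (∑ y', p (x, y')))
        - (∑ x, ∑ y, p (x, y) * Real.log (∑ x', p (x', y))) := by
    rw [Finset.sum_congr rfl fun x _ => Finset.sum_congr rfl fun y _ => h3 x y]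
    simp only [Finset.sum_sub_distrib]
  have hA : ∑ x, ∑ y, p (x, y) * Real.log (∑ y', p (x, y'))
      = ∑ x, (∑ y, p (x, y)) * Real.log (∑ y, p (x, y)) := by
    refine Finset.sum_congr rfl fun x _ => ?_
    rw [Finset.sum_mul]
  have hB : ∑ x, ∑ y, p (x, y) * Real.log (∑ x', p (x', y))
      = ∑ y, (∑ x, p (x, y)) * Real.log (∑ x, p (x, y)) := by
    rw [Finset.sum_comm]
    refine Finset.sum_congr rfl fun y _ => ?_
    rw [Finset.sum_mul]
  unfold entropy
  rw [hR, ← hA, ← hB, Fintype.sum_prod_type (f := fun z => p z * Real.log (p z))]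
  ring

/-- InfoNCE lower bound on mutual information: for a joint pmf `p` on
`ΩX × ΩY` with Y-marginal `pY y = ∑ x, p (x, y)`, a number of samples
`N ≥ 1`, and any strictly positive critic `f : ΩX × ΩY → ℝ`, consider the
joint distribution on `ΩX × (Fin N → ΩY)` in which `(x, ys 0)` is drawn from
`p` and `ys i` for `i ≠ 0` are drawn i.i.d. from `pY`.  Then
`I(X;Y) ≥ log N + E[log (f (x, ys 0) / ∑ i, f (x, ys i))]`,
where `I(X;Y) = H(X) + H(Y) - H(X,Y)`. -/
theorem infoNCE_lower_bound
    {ΩX ΩY : Type*} [Fintype ΩX] [Fintype ΩY] [Nonempty ΩX] [Nonempty ΩY]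
    (p : ΩX × ΩY → ℝ) (hp : ∀ z, 0 ≤ p z) (hps : ∑ z, p z = 1)
    (N : ℕ) (hN : 1 ≤ N)
    (f : ΩX × ΩY → ℝ) (hf : ∀ z, 0 < f z) :
    entropy (fun x : ΩX => ∑ y, p (x, y)) +
        entropy (fun y : ΩY => ∑ x, p (x, y)) -
        entropy p
      ≥
      Real.log N +
        ∑ x : ΩX, ∑ ys : Fin N → ΩY,
          (p (x, ys ⟨0, hN⟩) *
              ∏ i ∈ Finset.univ.filter (fun i : Fin N => i ≠ ⟨0, hN⟩),
                (∑ x', p (x', ys i))) *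
            Real.log (f (x, ys ⟨0, hN⟩) / ∑ i : Fin N, f (x, ys i)) := by
  have hps' : ∑ x, ∑ y, p (x, y) = 1 := by
    rw [← Fintype.sum_prod_type]; exact hps
  rw [aux_entropy p hp]
  exact aux_key p hp (fun x => ∑ y, p (x, y)) (fun y => ∑ x, p (x, y))
    (fun _ => rfl) (fun _ => rfl) hps' (⟨0, hN⟩ : Fin N) f hf
end
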